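/- arXiv:1603.01786 — 2 statements merged into one kernel-verified Lean document; each statement's English description precedes it below -/
import Mathlib

section
/- Fix θ ∈ [0, π/2), ε ∈ (0,1], capacity C > 0 and L = εC/(n(tan θ + 1)). Suppose nonnegative reals P₊, P₋, P_I and rounded values P̂₊, P̂₋, P̂_I satisfy max{P̂₊ − nL, 0} ≤ P₊ ≤ P̂₊, max{P̂₋ − nL, 0} ≤ P₋ ≤ P̂₋, max{P̂_I − nL, 0} ≤ P_I ≤ P̂_I, together with P̂₊ ≤ C(1 + tan θ) + L, P̂₋ ≤ C tan θ + L, and (P̂₊ − P̂₋)² + P̂_I² ≤ (1 + 2ε)² C². Then (P₊ − P₋)² + P_I² ≤ (1 + 4ε)² C². -/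
/-! Rounding each projection down by at most `n L ≤ ε C` moves the difference `P₊ - P₋` by at most
`ε C` and does not increase `P_I`. Since `|P̂₊ - P̂₋| ≤ (1 + 2ε) C`, expanding the square gives
`(P₊ - P₋)² + P_I² ≤ ((1 + 2ε) C + ε C)² = (1 + 3ε)² C²`. -/

lemma sq_add_sq_le_add_sq {a b a' b' R t : ℝ} (hR : 0 ≤ R) (ht : 0 ≤ t)
    (hab : a ^ 2 + b ^ 2 ≤ R ^ 2) (ha : |a' - a| ≤ t) (hb : |b'| ≤ |b|) :
    a' ^ 2 + b' ^ 2 ≤ (R + t) ^ 2 := by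
  have haR : |a| ≤ R := abs_le_of_sq_le_sq (by nlinarith [sq_nonneg b]) hR
  have ha' : |a'| ≤ |a| + t := by
    calc |a'| = |a + (a' - a)| := by rw [add_sub_cancel]
      _ ≤ |a| + |a' - a| := abs_add_le _ _
      _ ≤ |a| + t := by gcongr
  have ha'sq : a' ^ 2 ≤ (|a| + t) ^ 2 := by
    rw [← sq_abs a']; gcongr
  have hb'sq : b' ^ 2 ≤ b ^ 2 := sq_le_sq.mpr hb
  nlinarith [sq_abs a, mul_le_mul_of_nonneg_right haR ht]

lemma abs_sub_sub_sub_le_of_round_down {x y u v δ : ℝ} (hx : x ∈ Set.Icc (u - δ) u)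
    (hy : y ∈ Set.Icc (v - δ) v) : |(x - y) - (u - v)| ≤ δ := by
  rw [abs_le]
  constructor <;> linarith [hx.1, hx.2, hy.1, hy.2]

lemma natCast_mul_div_natCast_mul_le (n : ℕ) {x y : ℝ} (hx : 0 ≤ x) (hy : 1 ≤ y) :
    (n : ℝ) * (x / (n * y)) ≤ x := by
  rcases Nat.eq_zero_or_pos n with rfl | hn
  · simpa using hx
  · rw [mul_div_assoc', mul_div_mul_left _ _ (by positivity)]
    exact div_le_self hx hy

theorem rounded_violation_bound_general (n : ℕ) (θ ε C : ℝ)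
    (hθ0 : 0 ≤ θ) (hθ : θ < Real.pi / 2) (hε : 0 < ε) (hC : 0 < C)
    (L : ℝ) (hL : L = ε * C / (n * (Real.tan θ + 1)))
    (Pp Pm Pi Qp Qm Qi : ℝ)
    (hPi0 : 0 ≤ Pi)
    (hQp : max (Qp - n * L) 0 ≤ Pp ∧ Pp ≤ Qp)
    (hQm : max (Qm - n * L) 0 ≤ Pm ∧ Pm ≤ Qm)
    (hQi : max (Qi - n * L) 0 ≤ Pi ∧ Pi ≤ Qi)
    (hmag : (Qp - Qm) ^ 2 + Qi ^ 2 ≤ (1 + 2 * ε) ^ 2 * C ^ 2) :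
    (Pp - Pm) ^ 2 + Pi ^ 2 ≤ (1 + 4 * ε) ^ 2 * C ^ 2 := by
  have htan : 0 ≤ Real.tan θ := Real.tan_nonneg_of_nonneg_of_le_pi_div_two hθ0 hθ.le
  have hnL : n * L ≤ ε * C := hL ▸
    natCast_mul_div_natCast_mul_le n (by positivity) (by linarith)
  have hdiff : |(Pp - Pm) - (Qp - Qm)| ≤ ε * C :=
    (abs_sub_sub_sub_le_of_round_down ⟨(le_max_left _ _).trans hQp.1, hQp.2⟩
      ⟨(le_max_left _ _).trans hQm.1, hQm.2⟩).trans hnL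
  have hPi : |Pi| ≤ |Qi| := abs_le_abs_of_nonneg hPi0 hQi.2
  calc (Pp - Pm) ^ 2 + Pi ^ 2 ≤ ((1 + 2 * ε) * C + ε * C) ^ 2 :=
        sq_add_sq_le_add_sq (by positivity) (by positivity) (by rwa [mul_pow]) hdiff hPi
    _ ≤ (1 + 4 * ε) ^ 2 * C ^ 2 := by
        rw [← mul_pow]; gcongr; nlinarith

theorem rounded_violation_bound (n : ℕ) (hn : 0 < n) (θ ε C : ℝ)
    (hθ0 : 0 ≤ θ) (hθ : θ < Real.pi / 2) (hε : 0 < ε) (hε1 : ε ≤ 1) (hC : 0 < C)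
    (L : ℝ) (hL : L = ε * C / (n * (Real.tan θ + 1)))
    (Pp Pm Pi Qp Qm Qi : ℝ)
    (hPp0 : 0 ≤ Pp) (hPm0 : 0 ≤ Pm) (hPi0 : 0 ≤ Pi)
    (hQp : max (Qp - n * L) 0 ≤ Pp ∧ Pp ≤ Qp)
    (hQm : max (Qm - n * L) 0 ≤ Pm ∧ Pm ≤ Qm)
    (hQi : max (Qi - n * L) 0 ≤ Pi ∧ Pi ≤ Qi)
    (hQpub : Qp ≤ C * (1 + Real.tan θ) + L) (hQmub : Qm ≤ C * Real.tan θ + L)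
    (hmag : (Qp - Qm) ^ 2 + Qi ^ 2 ≤ (1 + 2 * ε) ^ 2 * C ^ 2) :
    (Pp - Pm) ^ 2 + Pi ^ 2 ≤ (1 + 4 * ε) ^ 2 * C ^ 2 :=
  rounded_violation_bound_general n θ ε C hθ0 hθ hε hC L hL Pp Pm Pi Qp Qm Qi hPi0 hQp hQm hQi hmag
end

section
/- Under the no-bottleneck assumption (every demand magnitude is at most C_min = min_t C_t), in any feasible solution to the complex-demand scheduling problem with all demand arguments in [0, φ], φ ≤ π/2, the number of selected δ-large demands whose intervals contain any fixed time slot t is at most 2⌊(1/δ²)·sec(φ/2)⌋. -/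
/-!
Split the δ-large demands through `t` according to whether their bottleneck lies left or right
of `t`. On the left, the demand `j₀` whose bottleneck is rightmost has `b j₀` inside every interval
of its group (the interval runs from before `b j` to after `t`), and symmetrically on the right;
so each group is simultaneously active at a single slot `t' = b j₀`. Rotating by `φ / 2`, all
demand vectors lie in a sector of half-angle `φ / 2`, so feasibility at `t'` bounds
`cos (φ / 2) · ∑ ‖s j‖` by `C t'`. By the no-bottleneck assumption
`‖s j‖ > δ C (b j) ≥ δ Cmin ≥ δ ‖s j₀‖ > δ² C t'` for every member, hence each group has at most
`1 / (δ² cos (φ / 2))` members.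
-/

open Finset Real

namespace Complex

theorem cos_mul_norm_le_re_exp_mul {z : ℂ} {θ α : ℝ} (hα : α ≤ π) (hz : |z.arg - θ| ≤ α) :
    Real.cos α * ‖z‖ ≤ (exp (↑(-θ) * I) * z).re := by
  have hrot : exp (↑(-θ) * I) * z = ‖z‖ * exp (↑(z.arg - θ) * I) := by
    conv_lhs => rw [← norm_mul_exp_arg_mul_I z]
    rw [mul_left_comm, ← exp_add]
    push_cast
    ring_nf
  rw [hrot, re_ofReal_mul, exp_ofReal_mul_I_re, mul_comm, ← Real.cos_abs (z.arg - θ)]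
  exact mul_le_mul_of_nonneg_left (cos_le_cos_of_nonneg_of_le_pi (abs_nonneg _) hα hz)
    (norm_nonneg z)

theorem cos_mul_sum_norm_le_norm_sum {ι : Type*} (s : Finset ι) (f : ι → ℂ) {θ α : ℝ}
    (hα : α ≤ π) (hf : ∀ i ∈ s, |(f i).arg - θ| ≤ α) :
    Real.cos α * ∑ i ∈ s, ‖f i‖ ≤ ‖∑ i ∈ s, f i‖ :=
  calc Real.cos α * ∑ i ∈ s, ‖f i‖
      = ∑ i ∈ s, Real.cos α * ‖f i‖ := mul_sum _ _ _
    _ ≤ ∑ i ∈ s, (exp (↑(-θ) * I) * f i).re :=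
        sum_le_sum fun i hi => cos_mul_norm_le_re_exp_mul hα (hf i hi)
    _ = (exp (↑(-θ) * I) * ∑ i ∈ s, f i).re := by rw [mul_sum, re_sum]
    _ ≤ ‖exp (↑(-θ) * I) * ∑ i ∈ s, f i‖ := re_le_norm _
    _ = ‖∑ i ∈ s, f i‖ := by rw [norm_mul, norm_exp_ofReal_mul_I, one_mul]

end Complex

section Intervals

variable {ι τ : Type*} [LinearOrder τ] {T : ι → Set τ} {b : ι → τ} {t : τ} {G : Finset ι}

theorem exists_bottleneck_mem_all_of_le (hT : ∀ j, (T j).OrdConnected)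
    (hb : ∀ j ∈ G, b j ∈ T j) (ht : ∀ j ∈ G, t ∈ T j) (hbt : ∀ j ∈ G, b j ≤ t)
    (hG : G.Nonempty) : ∃ j₀ ∈ G, ∀ j ∈ G, b j₀ ∈ T j := by
  obtain ⟨j₀, hj₀, hmax⟩ := G.exists_max_image b hG
  exact ⟨j₀, hj₀, fun j hj => (hT j).out (hb j hj) (ht j hj) ⟨hmax j hj, hbt j₀ hj₀⟩⟩

theorem exists_bottleneck_mem_all_of_ge (hT : ∀ j, (T j).OrdConnected)
    (hb : ∀ j ∈ G, b j ∈ T j) (ht : ∀ j ∈ G, t ∈ T j) (htb : ∀ j ∈ G, t ≤ b j)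
    (hG : G.Nonempty) : ∃ j₀ ∈ G, ∀ j ∈ G, b j₀ ∈ T j := by
  obtain ⟨j₀, hj₀, hmin⟩ := G.exists_min_image b hG
  exact ⟨j₀, hj₀, fun j hj => (hT j).out (ht j hj) (hb j hj) ⟨htb j₀ hj₀, hmin j hj⟩⟩

theorem card_le_two_mul_of_card_le_of_bottleneck_mem_all (hT : ∀ j, (T j).OrdConnected)
    {F : Finset ι} (hb : ∀ j ∈ F, b j ∈ T j) (ht : ∀ j ∈ F, t ∈ T j) (K : ℕ)
    (hK : ∀ G ⊆ F, ∀ j₀ ∈ G, (∀ j ∈ G, b j₀ ∈ T j) → #G ≤ K) : #F ≤ 2 * K := by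
  have hside : ∀ G ⊆ F, (G.Nonempty → ∃ j₀ ∈ G, ∀ j ∈ G, b j₀ ∈ T j) → #G ≤ K := by
    intro G hGF hcommon
    rcases G.eq_empty_or_nonempty with rfl | hG
    · simp
    · obtain ⟨j₀, hj₀, hj₀G⟩ := hcommon hG
      exact hK G hGF j₀ hj₀ hj₀G
  have hleft : #(F.filter (b · ≤ t)) ≤ K :=
    hside _ (filter_subset _ _) <| exists_bottleneck_mem_all_of_le hT
      (fun j hj => hb j (mem_filter.1 hj).1) (fun j hj => ht j (mem_filter.1 hj).1)
      (fun j hj => (mem_filter.1 hj).2)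
  have hright : #(F.filter (¬b · ≤ t)) ≤ K :=
    hside _ (filter_subset _ _) <| exists_bottleneck_mem_all_of_ge hT
      (fun j hj => hb j (mem_filter.1 hj).1) (fun j hj => ht j (mem_filter.1 hj).1)
      (fun j hj => (not_le.1 (mem_filter.1 hj).2).le)
  rw [← card_filter_add_card_filter_not (b · ≤ t)]
  omega

end Intervals

theorem card_le_of_mul_sum_le {ι : Type*} {w : ι → ℝ} {G A : Finset ι} {c κ ε : ℝ}
    (hGA : G ⊆ A) (hw : ∀ j ∈ A, 0 ≤ w j) (hκ : 0 < κ) (hε : 0 < ε) (hc : 0 < c)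
    (hload : κ * ∑ j ∈ A, w j ≤ c) (hlarge : ∀ j ∈ G, ε * c < w j) :
    (#G : ℝ) ≤ 1 / ε * (1 / κ) := by
  have hGsum : #G • (ε * c) ≤ ∑ j ∈ G, w j :=
    card_nsmul_le_sum G w _ fun j hj => (hlarge j hj).le
  have hsub : ∑ j ∈ G, w j ≤ ∑ j ∈ A, w j :=
    sum_le_sum_of_subset_of_nonneg hGA fun j hj _ => hw j hj
  rw [nsmul_eq_mul] at hGsum
  rw [div_mul_div_comm, one_mul, le_div_iff₀ (mul_pos hε hκ)]
  nlinarith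

open scoped Classical in
theorem delta_large_count (m N : ℕ) (s : Fin N → ℂ) (T : Fin N → Finset (Fin m))
    (C : Fin m → ℝ) (Cmin : ℝ) (hCmin : IsLeast (Set.range C) Cmin)
    (hNBA : ∀ j, ‖s j‖ ≤ Cmin)
    (hintv : ∀ j, ∃ t1 t2 : Fin m, T j = Finset.Icc t1 t2)
    (b : Fin N → Fin m) (hb : ∀ j, b j ∈ T j ∧ ∀ t ∈ T j, C (b j) ≤ C t)
    (φ δ : ℝ) (hφ0 : 0 ≤ φ) (hφ : φ ≤ Real.pi / 2) (hδ : 0 < δ)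
    (harg : ∀ j, 0 ≤ (s j).arg ∧ (s j).arg ≤ φ)
    (S : Finset (Fin N))
    (hfeas : ∀ t, ‖∑ j ∈ S.filter (fun j => t ∈ T j), s j‖ ≤ C t)
    (t : Fin m) :
    ((S.filter (fun j => t ∈ T j ∧ δ * C (b j) < ‖s j‖)).card : ℝ)
      ≤ 2 * ((⌊(1 / δ ^ 2) * (1 / Real.cos (φ / 2))⌋ : ℤ) : ℝ) := by
  have hcos : 0 < cos (φ / 2) := cos_pos_of_mem_Ioo ⟨by linarith [pi_pos], by linarith [pi_pos]⟩
  have hCmin_le : ∀ u, Cmin ≤ C u := fun u => hCmin.2 ⟨u, rfl⟩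
  have hsector : ∀ j, |(s j).arg - φ / 2| ≤ φ / 2 := fun j => by
    rw [abs_le]; constructor <;> linarith [harg j]
  have hload : ∀ u, cos (φ / 2) * ∑ j ∈ S.filter (fun j => u ∈ T j), ‖s j‖ ≤ C u := fun u =>
    (Complex.cos_mul_sum_norm_le_norm_sum _ s (by linarith [pi_pos]) fun j _ => hsector j).trans
      (hfeas u)
  have hgroup : ∀ G ⊆ S.filter (fun j => t ∈ T j ∧ δ * C (b j) < ‖s j‖), ∀ j₀ ∈ G,
      (∀ j ∈ G, b j₀ ∈ T j) → #G ≤ ⌊(1 / δ ^ 2) * (1 / cos (φ / 2))⌋₊ := by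
    intro G hG j₀ hj₀ hj₀G
    have hlarge : ∀ j ∈ G, δ * C (b j) < ‖s j‖ := fun j hj => (mem_filter.1 (hG hj)).2.2
    have hc : 0 < C (b j₀) := by
      nlinarith [hlarge j₀ hj₀, hNBA j₀, hCmin_le (b j₀), norm_nonneg (s j₀)]
    refine Nat.le_floor <| card_le_of_mul_sum_le (fun j hj => ?_) (fun _ _ => norm_nonneg _)
      hcos (pow_pos hδ 2) hc (hload (b j₀)) fun j hj => ?_
    · exact mem_filter.2 ⟨(mem_filter.1 (hG hj)).1, hj₀G j hj⟩
    · nlinarith [hlarge j hj, hlarge j₀ hj₀, hNBA j₀, hCmin_le (b j)]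
  have hconn : ∀ j, (T j : Set (Fin m)).OrdConnected := fun j => by
    obtain ⟨t₁, t₂, hT⟩ := hintv j
    rw [hT, coe_Icc]
    exact Set.ordConnected_Icc
  have hcount := card_le_two_mul_of_card_le_of_bottleneck_mem_all hconn
    (fun j _ => (hb j).1) (fun j hj => (mem_filter.1 hj).2.1) _ hgroup
  rw [← natCast_floor_eq_intCast_floor (by positivity)]
  exact_mod_cast hcount
end
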